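/- The limit of the maximal entropies H_n^max as n → ∞ equals (1 + t^{-2}) log₂(1/t), where t = (√5-1)/2, and this value equals L log₂ L - (L-1) log₂(L-1) with L = t^{-2}. -/

import Mathlib

open Finset

/-- `H_n^max = log₂ f (n+1) - (1 / f (n+1)) ∑_{i=1}^{n-1} f i log₂ (f i)`. -/
noncomputable def Hmax (n : ℕ) : ℝ :=
  Real.logb 2 (Nat.fib (n + 1) : ℝ) -
    (1 / (Nat.fib (n + 1) : ℝ)) *
      ∑ i ∈ Finset.Icc 1 (n - 1), (Nat.fib i : ℝ) * Real.logb 2 (Nat.fib i : ℝ)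

/-!
Put `A n = F (n+1) · H_n^max = F (n+1) log₂ F (n+1) - ∑_{i<n} F i log₂ F i`. Since
`F (n+2) = F (n+1) + F n`, the increment `A (n+1) - A n`, divided by `F (n+2) - F (n+1) = F n`,
equals `r log₂ (1 + 1/r) + log₂ (1 + r)` at `r = F (n+1) / F n → φ`, so it tends to
`φ log₂ φ + 2 log₂ φ` (as `1 + 1/φ = φ` and `1 + φ = φ²`). By Stolz–Cesàro,
`H_n^max = A n / F (n+1)` has the same limit, which is `(1 + t⁻²) log₂ (1/t)` because `1/t = φ`.
-/

open Filter Real Asymptotics Topology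
open scoped goldenRatio

/-- The Stolz–Cesàro theorem. -/
theorem tendsto_div_of_tendsto_sub_div_sub {f g : ℕ → ℝ} {l : ℝ} (hg : Monotone g)
    (hg_top : Tendsto g atTop atTop) (hg_lt : ∀ᶠ n in atTop, g n < g (n + 1))
    (h : Tendsto (fun n => (f (n + 1) - f n) / (g (n + 1) - g n)) atTop (𝓝 l)) :
    Tendsto (fun n => f n / g n) atTop (𝓝 l) := by
  have hΔ : (fun n => f (n + 1) - f n - l * (g (n + 1) - g n)) =o[atTop]
      fun n => g (n + 1) - g n := by
    rw [isLittleO_iff_tendsto' (hg_lt.mono fun n hn h0 => by linarith)]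
    refine (tendsto_sub_nhds_zero_iff.2 h).congr' (hg_lt.mono fun n hn => ?_)
    field_simp [(sub_pos.2 hn).ne']
  have htelescope (n : ℕ) : ∑ i ∈ range n, (f (i + 1) - f i - l * (g (i + 1) - g i)) =
      f n - f 0 - l * (g n - g 0) := by
    rw [sum_sub_distrib, ← mul_sum, sum_range_sub, sum_range_sub]
  have hsum := hΔ.sum_range (fun n => sub_nonneg.2 (hg n.le_succ))
    (by simpa only [sum_range_sub, ← sub_eq_add_neg] using
      tendsto_atTop_add_const_right _ (-g 0) hg_top)
  simp only [htelescope, sum_range_sub] at hsum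
  have hconst (c : ℝ) : (fun _ : ℕ => c) =o[atTop] g :=
    isLittleO_const_left.2 (Or.inr (tendsto_abs_atTop_atTop.comp hg_top))
  have hmain : (fun n => f n - l * g n) =o[atTop] g :=
    ((hsum.trans_isBigO ((isBigO_refl g atTop).sub (hconst (g 0)).isBigO)).add
      (hconst (f 0 - l * g 0))).congr_left fun n => by ring
  have hdiv := hmain.tendsto_div_nhds_zero.const_add l
  rw [add_zero] at hdiv
  refine hdiv.congr' ((hg_top.eventually_gt_atTop 0).mono fun n hn => ?_)
  field_simp
  ring

lemma mul_logb_add_sub_div {b p q : ℝ} (hp : 0 < p) (hq : 0 < q) :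
    ((p + q) * logb b (p + q) - p * logb b p - q * logb b q) / q =
      p / q * logb b (1 + (p / q)⁻¹) + logb b (1 + p / q) := by
  have h₁ : 1 + (p / q)⁻¹ = (p + q) / p := by field_simp
  have h₂ : 1 + p / q = (p + q) / q := by field_simp; ring
  rw [h₁, h₂, logb_div (by positivity) hp.ne', logb_div (by positivity) hq.ne']
  field_simp
  ring

lemma tendsto_natCast_fib_succ_atTop :
    Tendsto (fun n => (Nat.fib (n + 1) : ℝ)) atTop atTop :=
  tendsto_natCast_atTop_atTop.comp <| tendsto_atTop_mono
    (fun n => show n ≤ _ by have := Nat.le_fib_add_one (n + 1); omega) tendsto_id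

lemma sum_Icc_one_pred_eq_sum_range {M : Type*} [AddCommMonoid M] {x : ℕ → M} (hx : x 0 = 0)
    (n : ℕ) : ∑ i ∈ Icc 1 (n - 1), x i = ∑ i ∈ range n, x i :=
  sum_subset (fun i => by simp only [mem_Icc, mem_range]; omega)
    fun i hi hi' => by
      obtain rfl : i = 0 := by simp only [mem_Icc, mem_range] at hi hi'; omega
      exact hx

lemma fib_succ_mul_Hmax (n : ℕ) :
    Nat.fib (n + 1) * Hmax n = Nat.fib (n + 1) * logb 2 (Nat.fib (n + 1)) -
      ∑ i ∈ range n, Nat.fib i * logb 2 (Nat.fib i) := by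
  have hF : (Nat.fib (n + 1) : ℝ) ≠ 0 := Nat.cast_ne_zero.2 (Nat.fib_pos.2 n.succ_pos).ne'
  rw [Hmax, ← sum_Icc_one_pred_eq_sum_range (by simp)]
  field_simp

lemma tendsto_fib_entropy_increment :
    Tendsto (fun n => ((Nat.fib (n + 2) : ℝ) * logb 2 (Nat.fib (n + 2)) -
        Nat.fib (n + 1) * logb 2 (Nat.fib (n + 1)) - Nat.fib n * logb 2 (Nat.fib n)) /
        Nat.fib n) atTop (𝓝 ((φ + 2) * logb 2 φ)) := by
  have hφ : 0 < φ := goldenRatio_pos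
  have hcont : ContinuousAt (fun r => r * logb 2 (1 + r⁻¹) + logb 2 (1 + r)) φ := by
    fun_prop (disch := positivity)
  have hval : φ * logb 2 (1 + φ⁻¹) + logb 2 (1 + φ) = (φ + 2) * logb 2 φ := by
    rw [inv_goldenRatio, ← sub_eq_add_neg, one_sub_goldenRatio, add_comm 1 φ, ← goldenRatio_sq,
      logb_pow]
    push_cast
    ring
  refine hval ▸ (hcont.tendsto.comp tendsto_fib_succ_div_fib_atTop).congr'
    ((eventually_gt_atTop 0).mono fun n hn => ?_)
  have hF (k : ℕ) (hk : 0 < k) : (0 : ℝ) < Nat.fib k := Nat.cast_pos.2 (Nat.fib_pos.2 hk)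
  dsimp only [Function.comp_apply]
  rw [Nat.fib_add_two, Nat.cast_add, add_comm (Nat.fib n : ℝ),
    mul_logb_add_sub_div (hF _ n.succ_pos) (hF n hn)]

lemma tendsto_Hmax : Tendsto Hmax atTop (𝓝 ((φ + 2) * logb 2 φ)) := by
  have hF (n : ℕ) : (Nat.fib (n + 1) : ℝ) ≠ 0 :=
    Nat.cast_ne_zero.2 (Nat.fib_pos.2 n.succ_pos).ne'
  have hmono : Monotone fun n => (Nat.fib (n + 1) : ℝ) :=
    fun a b hab => Nat.cast_le.2 (Nat.fib_mono (by omega))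
  have hlt : ∀ᶠ n in atTop, (Nat.fib (n + 1) : ℝ) < Nat.fib (n + 1 + 1) :=
    (eventually_gt_atTop 0).mono fun n hn => by
      have : (0 : ℝ) < Nat.fib n := Nat.cast_pos.2 (Nat.fib_pos.2 hn)
      rw [Nat.fib_add_two, Nat.cast_add]
      linarith
  have hstolz := tendsto_div_of_tendsto_sub_div_sub (f := fun n => Nat.fib (n + 1) * Hmax n)
    hmono tendsto_natCast_fib_succ_atTop hlt <|
    tendsto_fib_entropy_increment.congr fun n => by
      rw [fib_succ_mul_Hmax, fib_succ_mul_Hmax, sum_range_succ, Nat.fib_add_two (n := n)]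
      push_cast
      ring
  exact hstolz.congr fun n => mul_div_cancel_left₀ _ (hF n)

lemma sqrt_five_sub_one_div_two : (√5 - 1) / 2 = φ⁻¹ := by
  rw [inv_goldenRatio, goldenConj]
  ring

/-- With `t = (√5 - 1)/2`, the maximal entropies `H_n^max` converge to
`(1 + t⁻²) log₂ (1/t)` as `n → ∞`, and this value equals
`L log₂ L - (L - 1) log₂ (L - 1)` for `L = t⁻²`. -/
theorem Hmax_tendsto :
    (Filter.Tendsto Hmax Filter.atTop
      (nhds ((1 + 1 / ((Real.sqrt 5 - 1) / 2) ^ 2) *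
        Real.logb 2 (1 / ((Real.sqrt 5 - 1) / 2))))) ∧
    (∀ t : ℝ, t = (Real.sqrt 5 - 1) / 2 →
      (1 / t ^ 2) * Real.logb 2 (1 / t ^ 2) -
          (1 / t ^ 2 - 1) * Real.logb 2 (1 / t ^ 2 - 1) =
        (1 + 1 / t ^ 2) * Real.logb 2 (1 / t)) := by
  have h₁ : 1 / φ⁻¹ = φ := by rw [one_div, inv_inv]
  have h₂ : 1 / φ⁻¹ ^ 2 = φ + 1 := by rw [inv_pow, one_div, inv_inv, goldenRatio_sq]
  refine ⟨?_, fun t ht => ?_⟩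
  · rw [sqrt_five_sub_one_div_two, h₁, h₂]
    convert tendsto_Hmax using 3
    ring
  · rw [ht, sqrt_five_sub_one_div_two, h₁, h₂, add_sub_cancel_right, ← goldenRatio_sq,
      logb_pow]
    push_cast
    linear_combination logb 2 φ * goldenRatio_sq
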